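/- Let G be a proper interval graph with intervals ordered by left endpoints, let U be a k-dominating set, let C be a component of G[U] with intervals I_{j_1} < ... < I_{j_p} where p ≥ 2k, and let q ∈ {1, ..., p-2k+1}. Then every interval I of G not in {I_{j_1},...,I_{j_p}} with I_{j_{q+k-1}} < I < I_{j_{q+k}} intersects at least k intervals from the set {I_{j_q}, I_{j_{q+1}}, ..., I_{j_{q+2k-1}}}. -/

import Mathlib

/-- The intersection graph of a proper interval model. -/
def interGraph (n : ℕ) (a b : Fin n → ℝ) : SimpleGraph (Fin n) where
  Adj i j := i ≠ j ∧ (Set.Icc (a i) (b i) ∩ Set.Icc (a j) (b j)).Nonempty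
  symm := ⟨fun i j h => ⟨h.1.symm, Set.inter_comm _ _ ▸ h.2⟩⟩
  loopless := ⟨fun i h => h.1 rfl⟩

/-!
Since no interval contains another, the right endpoints increase with the left ones, so an
edge `x < z` of `G` makes `x` and `z` adjacent to every `y` between them. A walk inside `C` from
`I_{j_{q+k-1}}` to `I_{j_{q+k}}` must therefore jump over `I` along an edge `u < I < w` of `C`.
Hence `I ∉ U` (else `I` would be adjacent to `u`, so in `C`), and every `U`-neighbour of `I` is
`u`, `w` or adjacent to one of them, so lies in `C`: `I` has at least `k` neighbours among the
`I_{j_m}`. These neighbours form a run of consecutive positions: if one lies left of the window,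
all of `q, …, q+k-1` are neighbours; if one lies right of it, all of `q+k, …, q+2k-1` are;
otherwise all of them lie in the window.
-/

theorem SimpleGraph.ConnectedComponent.exists_adj_lt_le {V ι : Type*} [LinearOrder ι]
    {G : SimpleGraph V} (C : G.ConnectedComponent) (f : V → ι) {i : ι} {x y : V}
    (hx : x ∈ C.supp) (hy : y ∈ C.supp) (hxi : f x < i) (hiy : i ≤ f y) :
    ∃ u ∈ C.supp, ∃ w ∈ C.supp, G.Adj u w ∧ f u < i ∧ i ≤ f w := by
  obtain ⟨W⟩ := C.reachable_of_mem_supp hx hy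
  induction W with
  | nil => exact absurd (hxi.trans_le hiy) (lt_irrefl _)
  | @cons x x' y hadj W ih =>
    have hx' : x' ∈ C.supp := C.mem_supp_of_adj_mem_supp hx hadj
    by_cases hx'i : f x' < i
    · exact ih hx' hy hx'i hiy
    · exact ⟨x, hx, x', hx', hadj, hxi, not_lt.mp hx'i⟩

theorem strictMono_of_not_Icc_subset {ι α : Type*} [Preorder ι] [LinearOrder α]
    {a b : ι → α} (ha : Monotone a)
    (hproper : ∀ i j : ι, i ≠ j → ¬Set.Icc (a i) (b i) ⊆ Set.Icc (a j) (b j)) :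
    StrictMono b := fun _ _ hxy =>
  lt_of_not_ge fun hba => hproper _ _ hxy.ne' (Set.Icc_subset_Icc (ha hxy.le) hba)

theorem le_ncard_of_Ico_subset {p c k : ℕ} {T : Set (Fin p)} (hck : c + k ≤ p)
    (hT : ∀ m : Fin p, c ≤ (m : ℕ) → (m : ℕ) < c + k → m ∈ T) : k ≤ T.ncard := by
  have hIco : Set.Ico c (c + k) ⊆ Fin.val '' T :=
    fun m ⟨hcm, hmk⟩ => ⟨⟨m, by omega⟩, hT _ hcm hmk, rfl⟩
  calc k = (Set.Ico c (c + k)).ncard := by simp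
    _ ≤ (Fin.val '' T).ncard := Set.ncard_le_ncard hIco (Set.toFinite _)
    _ = T.ncard := Set.ncard_image_of_injective _ Fin.val_injective

theorem le_ncard_window {p q k : ℕ} (P : Fin p → Prop) (hq : q + 2 * k ≤ p)
    (hlow : ∀ m t : Fin p, m < t → (t : ℕ) < q + k → P m → P t)
    (hhigh : ∀ m t : Fin p, t < m → q + k ≤ (t : ℕ) → P m → P t)
    (hP : k ≤ {m | P m}.ncard) :
    k ≤ {m : Fin p | q ≤ (m : ℕ) ∧ (m : ℕ) < q + 2 * k ∧ P m}.ncard := by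
  by_cases hbelow : ∃ m : Fin p, (m : ℕ) < q ∧ P m
  · obtain ⟨m, hmq, hm⟩ := hbelow
    exact le_ncard_of_Ico_subset (by omega) fun t hqt htk =>
      ⟨hqt, by omega, hlow m t (by omega) htk hm⟩
  by_cases habove : ∃ m : Fin p, q + 2 * k ≤ (m : ℕ) ∧ P m
  · obtain ⟨m, hmq, hm⟩ := habove
    exact le_ncard_of_Ico_subset (by omega) fun t hqt htk =>
      ⟨by omega, by omega, hhigh m t (by omega) hqt hm⟩
  push Not at hbelow habove
  refine hP.trans (Set.ncard_le_ncard (fun m hm => ⟨?_, ?_, hm⟩) (Set.toFinite _))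
  · by_contra h
    exact hbelow m (by omega) hm
  · by_contra h
    exact habove m (by omega) hm

namespace interGraph

variable {n : ℕ} {a b : Fin n → ℝ}

theorem adj_iff_of_lt (hab : ∀ i, a i ≤ b i) (ha : Monotone a) {x y : Fin n} (hxy : x < y) :
    (interGraph n a b).Adj x y ↔ a y ≤ b x := by
  simp only [interGraph, Set.Icc_inter_Icc, Set.nonempty_Icc, max_eq_right (ha hxy.le),
    le_inf_iff, ne_eq, hxy.ne, not_false_eq_true, true_and, hab y, and_true]

/- The umbrella property of proper interval orderings. -/
theorem adj_of_adj_of_lt_of_lt (hab : ∀ i, a i ≤ b i) (ha : Monotone a) (hb : Monotone b)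
    {x y z : Fin n} (hxy : x < y) (hyz : y < z) (hxz : (interGraph n a b).Adj x z) :
    (interGraph n a b).Adj x y ∧ (interGraph n a b).Adj y z := by
  rw [adj_iff_of_lt hab ha (hxy.trans hyz)] at hxz
  rw [adj_iff_of_lt hab ha hxy, adj_iff_of_lt hab ha hyz]
  exact ⟨(ha hyz.le).trans hxz, hxz.trans (hb hxy.le)⟩

theorem eq_or_adj_of_adj_of_lt_of_lt (hab : ∀ i, a i ≤ b i) (ha : Monotone a) (hb : Monotone b)
    {u i w v : Fin n} (hui : u < i) (hiw : i < w) (huw : (interGraph n a b).Adj u w)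
    (hiv : (interGraph n a b).Adj i v) :
    (v = u ∨ (interGraph n a b).Adj u v) ∨ (v = w ∨ (interGraph n a b).Adj w v) := by
  have umbrella := @adj_of_adj_of_lt_of_lt n a b hab ha hb
  rcases lt_trichotomy v i with hvi | rfl | hiv'
  · rcases lt_trichotomy v u with hvu | rfl | huv
    · exact .inl (.inr (umbrella hvu hui hiv.symm).1.symm)
    · exact .inl (.inl rfl)
    · exact .inl (.inr (umbrella huv (hvi.trans hiw) huw).1)
  · exact absurd rfl hiv.ne
  · rcases lt_trichotomy v w with hvw | rfl | hwv
    · exact .inr (.inr (umbrella (hui.trans hiv') hvw huw).2.symm)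
    · exact .inr (.inl rfl)
    · exact .inr (.inr (umbrella hiw hwv hiv).2)

theorem le_ncard_window_adj (hab : ∀ i, a i ≤ b i) (ha : Monotone a) (hb : Monotone b)
    {p q k : ℕ} {j : Fin p → Fin n} (hj : StrictMono j) (hk : 0 < k) (hq : q + 2 * k ≤ p)
    {i : Fin n} (hlo : j ⟨q + k - 1, by omega⟩ < i) (hhi : i < j ⟨q + k, by omega⟩)
    (hN : k ≤ {m | (interGraph n a b).Adj i (j m)}.ncard) :
    k ≤ {m : Fin p | q ≤ (m : ℕ) ∧ (m : ℕ) < q + 2 * k ∧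
      (interGraph n a b).Adj i (j m)}.ncard := by
  have umbrella := @adj_of_adj_of_lt_of_lt n a b hab ha hb
  refine le_ncard_window _ hq (fun m t hmt htk hm => ?_) (fun m t htm hkt hm => ?_) hN
  · have hti : j t < i := (hj.monotone (show (t : ℕ) ≤ q + k - 1 by omega)).trans_lt hlo
    exact (umbrella (hj hmt) hti hm.symm).2.symm
  · have hit : i < j t := hhi.trans_le (hj.monotone (show q + k ≤ (t : ℕ) from hkt))
    exact (umbrella hit (hj htm) hm).1

end interGraph

/-- For a component of G[U] (U a k-dominating set) with intervals
I_{j 0} < ... < I_{j (p-1)}, p ≥ 2k, and a window of 2k consecutive intervals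
starting at position q, every interval of G outside the component lying strictly
between the two middle intervals of the window intersects at least k intervals
of the window. -/
theorem stmt_13 (n k p : ℕ) (hk : 0 < k) (a b : Fin n → ℝ) (hab : ∀ i, a i ≤ b i)
    (hmono : StrictMono a)
    (hproper : ∀ i j : Fin n, i ≠ j →
      ¬(Set.Icc (a i) (b i) ⊆ Set.Icc (a j) (b j)))
    (U : Set (Fin n))
    (hdom : ∀ v : Fin n, v ∉ U →
      k ≤ {w | w ∈ U ∧ (interGraph n a b).Adj v w}.ncard)
    (j : Fin p → Fin n) (hjmono : StrictMono j)
    (hC : ∃ cc : ((interGraph n a b).induce U).ConnectedComponent,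
      Set.range j = Subtype.val '' cc.supp)
    (q : ℕ) (hq : q + 2 * k ≤ p) :
    ∀ i : Fin n, i ∉ Set.range j →
      j ⟨q + k - 1, by omega⟩ < i → i < j ⟨q + k, by omega⟩ →
      k ≤ {m : Fin p | q ≤ (m : ℕ) ∧ (m : ℕ) < q + 2 * k ∧
        (Set.Icc (a i) (b i) ∩ Set.Icc (a (j m)) (b (j m))).Nonempty}.ncard := by
  intro i hi hlo hhi
  set G := interGraph n a b
  obtain ⟨cc, hcc⟩ := hC
  have ha : Monotone a := hmono.monotone
  have hb : Monotone b := (strictMono_of_not_Icc_subset ha hproper).monotone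
  have mem_of_adj :
      ∀ x ∈ cc.supp, ∀ v (hv : v ∈ U), v = x.1 ∨ G.Adj x.1 v → v ∈ Set.range j
  | x, hx, _, _, .inl rfl => hcc ▸ ⟨x, hx, rfl⟩
  | _, hx, v, hv, .inr hxv => hcc ▸ ⟨⟨v, hv⟩, cc.mem_supp_of_adj_mem_supp hx hxv, rfl⟩
  have mem_supp (m : Fin p) : ∃ x ∈ cc.supp, x.1 = j m := by
    simpa [hcc] using Set.mem_range_self (f := j) m
  obtain ⟨x, hx, hxj⟩ := mem_supp ⟨q + k - 1, by omega⟩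
  obtain ⟨y, hy, hyj⟩ := mem_supp ⟨q + k, by omega⟩
  obtain ⟨u, hu, w, hw, huw, hui, hiw⟩ :=
    cc.exists_adj_lt_le Subtype.val hx hy (hxj ▸ hlo) (hyj ▸ hhi.le)
  replace hiw : i < w.1 := hiw.lt_of_ne fun h => hi (hcc ▸ ⟨w, hw, h.symm⟩)
  have hiU : i ∉ U := fun hiU => hi <|
    mem_of_adj u hu i hiU (.inr (interGraph.adj_of_adj_of_lt_of_lt hab ha hb hui hiw huw).1)
  have nbr_subset : {v | v ∈ U ∧ G.Adj i v} ⊆ j '' {m | G.Adj i (j m)} := by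
    rintro v ⟨hv, hiv⟩
    obtain ⟨m, rfl⟩ : v ∈ Set.range j := by
      rcases interGraph.eq_or_adj_of_adj_of_lt_of_lt hab ha hb hui hiw huw hiv with hvu | hvw
      exacts [mem_of_adj u hu v hv hvu, mem_of_adj w hw v hv hvw]
    exact ⟨m, hiv, rfl⟩
  have hN : k ≤ {m | G.Adj i (j m)}.ncard :=
    (hdom i hiU).trans <| (Set.ncard_le_ncard nbr_subset).trans Set.ncard_image_le
  exact (interGraph.le_ncard_window_adj hab ha hb hjmono hk hq hlo hhi hN).trans
    (Set.ncard_le_ncard (fun m ⟨h1, h2, hm⟩ => ⟨h1, h2, hm.2⟩) (Set.toFinite _))
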